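/- For each integer n ≥ 2, the pair C_n is a horizontal almost ι_K-complex, and the F₂[U]-linear chain map f_n : C_n → C_{n+1} defined by f_n(a_n)=a_{n+1}, f_n(b_n)=U b_{n+1}, f_n(c_n)=0, f_n(d_n)=0, f_n(x_n)=x_{n+1} is an almost ι_K-local map; hence [C_n] ≤ [C_{n+1}] in 𝔗^U_K. -/

import Mathlib

/-!
Algebraic model for horizontal almost `ι_K`-complexes (Kang–Park,
"Torsion in the knot concordance group and cabling").

Conventions.  We work over `F₂ = ℤ/2`.  A bigraded chain complex of finitely
generated free `F₂[U]`-modules is presented by a finite homogeneous basis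
`idx`, a bidegree function `gr : idx → ℤ × ℤ` (Alexander and Maslov gradings),
and a differential matrix `d` over `F₂[U]` (the `j`-th basis vector is sent to
`∑ i, d i j • eᵢ`; matrix multiplication is composition).  The variable `U`
has bidegree `(−1, −2)` and the differential has bidegree `(0, −1)`.
-/

open Polynomial Matrix Kronecker

noncomputable section

/-- The field with two elements. -/
abbrev F2 : Type := ZMod 2

/-- The ring `F₂[U]`. -/
abbrev PolyU : Type := Polynomial F2

/-- The ring `F₂[U, U⁻¹]`. -/
abbrev Laur : Type := LaurentPolynomial F2

/-- The localization map `F₂[U] → F₂[U, U⁻¹]`. -/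
def toL : PolyU →+* Laur := Polynomial.toLaurent

/-- The skew of a bidegree: `(A, M) ↦ (−A, M)`. -/
def skew (p : ℤ × ℤ) : ℤ × ℤ := (-p.1, p.2)

/-- Data of a bigraded complex of finitely generated free `F₂[U]`-modules. -/
structure CxData where
  idx : Type
  [fintype_idx : Fintype idx]
  [dec_idx : DecidableEq idx]
  gr : idx → ℤ × ℤ
  d : Matrix idx idx PolyU

attribute [instance] CxData.fintype_idx CxData.dec_idx

/-- The `U = 0` (hat-flavored) truncation of a matrix over `F₂[U]`. -/
def hatM {m n : Type} (f : Matrix m n PolyU) : Matrix m n F2 :=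
  fun i j => (f i j).coeff 0

/-- `f` is a homogeneous `F₂[U]`-linear map of bidegree `δ` from `C` to `D`:
a monomial `U^k` appearing in the entry `(i, j)` forces
`gr i + k • (−1, −2) = gr j + δ`. -/
def GradedMap (C D : CxData) (δ : ℤ × ℤ) (f : Matrix D.idx C.idx PolyU) : Prop :=
  ∀ (i : D.idx) (j : C.idx) (k : ℕ), (f i j).coeff k ≠ 0 →
    D.gr i + (-(k : ℤ), -2 * (k : ℤ)) = C.gr j + δ

/-- An element (column vector) of `C` is homogeneous of bidegree `δ`. -/
def Homog (C : CxData) (δ : ℤ × ℤ) (v : Matrix C.idx Unit PolyU) : Prop :=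
  ∀ (i : C.idx) (k : ℕ), (v i ()).coeff k ≠ 0 →
    C.gr i + (-(k : ℤ), -2 * (k : ℤ)) = δ

namespace CxData

/-- `C` is a bigraded chain complex: `∂² = 0` and `∂` has bidegree `(0, −1)`. -/
def IsComplex (C : CxData) : Prop :=
  C.d * C.d = 0 ∧ GradedMap C C (0, -1) C.d

/-- The formal derivative `Φ` of the differential with respect to `U`. -/
def Phi (C : CxData) : Matrix C.idx C.idx PolyU :=
  fun i j => derivative (C.d i j)

/-- The induced differential on the truncation `Ĉ = C/UC`. -/
def dHat (C : CxData) : Matrix C.idx C.idx F2 := hatM C.d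

/-- The truncation of `Φ` to `Ĉ`. -/
def PhiHat (C : CxData) : Matrix C.idx C.idx F2 := hatM C.Phi

/-- The localized differential, over `F₂[U, U⁻¹]`. -/
def dL (C : CxData) : Matrix C.idx C.idx Laur := C.d.map toL

end CxData

/-- Chain homotopy (everything is mod 2) between maps `Ĉ → D̂` of truncations. -/
def HatHomotopic (C D : CxData) (f g : Matrix D.idx C.idx F2) : Prop :=
  ∃ H : Matrix D.idx C.idx F2, f + g = D.dHat * H + H * C.dHat

/-- Chain homotopy between maps `C → D` over `F₂[U]`. -/
def Homotopic (C D : CxData) (f g : Matrix D.idx C.idx PolyU) : Prop :=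
  ∃ H : Matrix D.idx C.idx PolyU, f + g = D.d * H + H * C.d

/-- Chain homotopy between maps `U⁻¹C → U⁻¹D` over `F₂[U, U⁻¹]`. -/
def LHomotopic (C D : CxData) (f g : Matrix D.idx C.idx Laur) : Prop :=
  ∃ H : Matrix D.idx C.idx Laur, f + g = D.dL * H + H * C.dL

/-- A matrix on the truncation `Ĉ` is skew-graded: each nonzero entry takes
bidegree `(A, M)` to `(−A, M)`. -/
def SkewGraded (C : CxData) (f : Matrix C.idx C.idx F2) : Prop :=
  ∀ i j, f i j ≠ 0 → C.gr i = skew (C.gr j)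

/-- `f` is a chain homotopy equivalence of the truncation `Ĉ`. -/
def HatHomotopyEquiv (C : CxData) (f : Matrix C.idx C.idx F2) : Prop :=
  f * C.dHat = C.dHat * f ∧
  ∃ g : Matrix C.idx C.idx F2, g * C.dHat = C.dHat * g ∧
    HatHomotopic C C (g * f) 1 ∧ HatHomotopic C C (f * g) 1

/-- The localization `U⁻¹C` is chain homotopy equivalent to `F₂[U, U⁻¹]`
(one generator, zero differential). -/
def LocalizationTrivial (C : CxData) : Prop :=
  ∃ (f : Matrix Unit C.idx Laur) (g : Matrix C.idx Unit Laur),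
    f * C.dL = 0 ∧ C.dL * g = 0 ∧ f * g = 1 ∧
    ∃ H : Matrix C.idx C.idx Laur, 1 + g * f = C.dL * H + H * C.dL

/-- The homology class of the cycle `x` generates the homology of `U⁻¹C`:
the chain map `F₂[U,U⁻¹] → U⁻¹C` sending the generator to `x` is a chain
homotopy equivalence. -/
def GeneratesLocalHomology (C : CxData) (x : Matrix C.idx Unit PolyU) : Prop :=
  C.dL * x.map toL = 0 ∧
  ∃ p : Matrix Unit C.idx Laur, p * C.dL = 0 ∧ p * x.map toL = 1 ∧
    ∃ H : Matrix C.idx C.idx Laur, 1 + x.map toL * p = C.dL * H + H * C.dL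

/-- A pair as in Definition 2.4: a complex together with an involution of the
hat-flavored truncation. -/
structure Hor where
  C : CxData
  iota : Matrix C.idx C.idx F2

/-- `(C, ι)` is a horizontal almost `ι_K`-complex. -/
def IsHorizontal (X : Hor) : Prop :=
  X.C.IsComplex ∧
  LocalizationTrivial X.C ∧
  HatHomotopyEquiv X.C X.iota ∧
  SkewGraded X.C X.iota ∧
  HatHomotopic X.C X.C (X.C.PhiHat * X.iota * X.C.PhiHat * X.iota)
    (X.iota * X.C.PhiHat * X.iota * X.C.PhiHat) ∧
  HatHomotopic X.C X.C (X.iota * X.iota)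
    (1 + X.C.PhiHat * X.iota * X.C.PhiHat * X.iota) ∧
  ∃ f : Matrix X.C.idx X.C.idx PolyU, f * X.C.d = X.C.d * f ∧
    HatHomotopic X.C X.C (hatM f) (X.iota * X.C.PhiHat * X.iota)

/-- The localization `U⁻¹f` of `f` is a chain homotopy equivalence. -/
def LocalizedHomotopyEquiv (C D : CxData) (f : Matrix D.idx C.idx PolyU) : Prop :=
  ∃ g : Matrix C.idx D.idx Laur,
    g * D.dL = C.dL * g ∧
    LHomotopic C C (g * f.map toL) 1 ∧
    LHomotopic D D (f.map toL * g) 1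

/-- An almost `ι_K`-local map from `(C, ι_C)` to `(D, ι_D)`: a bidegree
preserving `F₂[U]`-linear chain map whose localization is a chain homotopy
equivalence and whose truncation homotopy-commutes with the involutions. -/
def AlmostLocalMap (X Y : Hor) (f : Matrix Y.C.idx X.C.idx PolyU) : Prop :=
  GradedMap X.C Y.C (0, 0) f ∧
  f * X.C.d = Y.C.d * f ∧
  LocalizedHomotopyEquiv X.C Y.C f ∧
  HatHomotopic X.C Y.C (Y.iota * hatM f) (hatM f * X.iota)

/-- `X ≤ Y`: there is an almost `ι_K`-local map from `X` to `Y`. -/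
def Le (X Y : Hor) : Prop := ∃ f, AlmostLocalMap X Y f

/-- Almost `ι_K`-local equivalence. -/
def AlmostLocalEquiv (X Y : Hor) : Prop := Le X Y ∧ Le Y X

/-- The tensor product over `F₂[U]` of two complexes. -/
def tensorCx (C D : CxData) : CxData where
  idx := C.idx × D.idx
  gr := fun p => C.gr p.1 + D.gr p.2
  d := C.d ⊗ₖ (1 : Matrix D.idx D.idx PolyU) + (1 : Matrix C.idx C.idx PolyU) ⊗ₖ D.d

/-- The tensor product of pairs, with `ι_{C⊗D} = ι_C ⊗ ι_D + Φι_C ⊗ ι_D Φ`. -/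
def tensorHor (X Y : Hor) : Hor where
  C := tensorCx X.C Y.C
  iota := X.iota ⊗ₖ Y.iota + (X.C.PhiHat * X.iota) ⊗ₖ (Y.iota * Y.C.PhiHat)

/-- The trivial complex `C_O = F₂[U]`, generator in bidegree `(0,0)`, zero
differential, identity involution. -/
def CO : Hor where
  C := { idx := Unit, gr := fun _ => (0, 0), d := 0 }
  iota := 1

/-- The complex `C_E` of the figure-eight knot: generators `a, b, c, d, x`
(indices `0, 1, 2, 3, 4`), with `a, x` in bidegree `(0,0)`, differential
`∂a = Ub`, `∂c = Ud`, `∂b = ∂d = ∂x = 0`, and involution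
`ι(a) = a + x`, `ι(b) = c`, `ι(c) = b`, `ι(d) = d`, `ι(x) = x + d`. -/
def CE : Hor where
  C := { idx := Fin 5
         gr := ![(0, 0), (1, 1), (-1, 1), (0, 2), (0, 0)]
         d := !![0, 0, 0, 0, 0;
                 Polynomial.X, 0, 0, 0, 0;
                 0, 0, 0, 0, 0;
                 0, 0, Polynomial.X, 0, 0;
                 0, 0, 0, 0, 0] }
  iota := !![1, 0, 0, 0, 0;
             0, 0, 1, 0, 0;
             0, 1, 0, 0, 0;
             0, 0, 0, 1, 1;
             1, 0, 0, 0, 1]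

/-- The complex `C_n`: generators `a_n, b_n, c_n, d_n, x_n` (indices
`0, …, 4`), `a_n, x_n` in bidegree `(0,0)`, differential `∂a_n = Uⁿ b_n`,
`∂c_n = Uⁿ d_n`, and involution `ι(a_n) = a_n + x_n`, `ι(b_n) = c_n`,
`ι(c_n) = b_n`, `ι(d_n) = d_n`, `ι(x_n) = x_n`. -/
def Cn (n : ℕ) : Hor where
  C := { idx := Fin 5
         gr := ![(0, 0), ((n : ℤ), 2 * (n : ℤ) - 1), (-(n : ℤ), 2 * (n : ℤ) - 1),
                 (0, 4 * (n : ℤ) - 2), (0, 0)]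
         d := !![0, 0, 0, 0, 0;
                 Polynomial.X ^ n, 0, 0, 0, 0;
                 0, 0, 0, 0, 0;
                 0, 0, Polynomial.X ^ n, 0, 0;
                 0, 0, 0, 0, 0] }
  iota := !![1, 0, 0, 0, 0;
             0, 0, 1, 0, 0;
             0, 1, 0, 0, 0;
             0, 0, 0, 1, 0;
             1, 0, 0, 0, 1]

/-- The dual complex `C* = Hom_{F₂[U]}(C, F₂[U])`: dual basis, negated
gradings, transposed differential. -/
def dualCx (C : CxData) : CxData where
  idx := C.idx
  gr := fun i => -C.gr i
  d := C.dᵀ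

/-- The dual pair `(C*, ι*)`. -/
def dualHor (X : Hor) : Hor where
  C := dualCx X.C
  iota := X.iotaᵀ

/-- `n`-fold tensor power (`0` gives the trivial complex `C_O`). -/
def tensorPow (X : Hor) : ℕ → Hor
  | 0 => CO
  | n + 1 => tensorHor (tensorPow X n) X

/-- The trace map `tr : C ⊗ C* → F₂[U]`. -/
def trMap (C : CxData) : Matrix Unit (C.idx × C.idx) PolyU :=
  fun _ p => if p.1 = p.2 then 1 else 0

/-- The cotrace map `cotr : F₂[U] → C ⊗ C*`. -/
def cotrMap (C : CxData) : Matrix (C.idx × C.idx) Unit PolyU :=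
  fun p _ => if p.1 = p.2 then 1 else 0


/-- The chain map `f_n : C_n → C_{n+1}` with `f_n(a_n) = a_{n+1}`,
`f_n(b_n) = U b_{n+1}`, `f_n(c_n) = f_n(d_n) = 0`, `f_n(x_n) = x_{n+1}`. -/
def fCn : Matrix (Fin 5) (Fin 5) PolyU :=
  !![1, 0, 0, 0, 0;
     0, Polynomial.X, 0, 0, 0;
     0, 0, 0, 0, 0;
     0, 0, 0, 0, 0;
     0, 0, 0, 0, 1]

/-!
`C_n` splits as `F₂[U]·x ⊕ (a → Uⁿ b) ⊕ (c → Uⁿ d)`. Once `U` is inverted, each of the two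
pairs is contracted by the homotopy `U⁻ⁿ` in the opposite direction, so `U⁻¹C_n` is generated
by `x`. Modulo `U` both `∂ = Uⁿ(…)` and `Φ = nUⁿ⁻¹(…)` vanish because `n ≥ 2`, so every
homotopy condition on `Ĉ_n` becomes an identity between matrices of `ι`, and `ι² = 1` holds
on the nose. The map `f_n` is the identity on `x`, multiplies `b` by `U` and kills `c, d`: its
localization is inverted by `b ↦ U⁻¹ b` up to the contraction of the pair `(c, d)`, and its
truncation `diag(1,0,0,0,1)` commutes with `ι`.
-/

open LaurentPolynomial

instance : CharP Laur 2 := charP_of_injective_algebraMap' F2 2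

lemma hatM_eq_map {m n : Type} (f : Matrix m n PolyU) : hatM f = f.map (lcoeff F2 0) := rfl

lemma HatHomotopic.of_eq {C D : CxData} {f g : Matrix D.idx C.idx F2} (h : f = g) :
    HatHomotopic C D f g :=
  ⟨0, by subst h; ext; simp [CharTwo.add_self_eq_zero]⟩

lemma LHomotopic.of_eq_sub {C D : CxData} {f g : Matrix D.idx C.idx Laur}
    (H : Matrix D.idx C.idx Laur) (h : D.dL * H + H * C.dL = g - f) : LHomotopic C D f g :=
  ⟨H, by rw [h]; ext i j : 1; simp [CharTwo.sub_eq_add, add_comm]⟩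

theorem IsHorizontal.of_dHat_eq_zero_of_PhiHat_eq_zero (X : Hor) (hC : X.C.IsComplex)
    (hL : LocalizationTrivial X.C) (hskew : SkewGraded X.C X.iota) (hd : X.C.dHat = 0)
    (hΦ : X.C.PhiHat = 0) (hι : X.iota * X.iota = 1) : IsHorizontal X := by
  have hcomm : X.iota * X.C.dHat = X.C.dHat * X.iota := by simp [hd]
  refine ⟨hC, hL, ⟨hcomm, X.iota, hcomm, .of_eq hι, .of_eq hι⟩, hskew,
    .of_eq (by simp [hΦ]), .of_eq (by simp [hι, hΦ]), 0, by simp, .of_eq ?_⟩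
  ext i j
  simp [hatM, hΦ]

theorem localizationTrivial_of_contraction (C : CxData) (x : C.idx)
    (hcycle : ∀ i, C.d i x = 0) (hnot_boundary : ∀ j, C.d x j = 0) (H : Matrix C.idx C.idx Laur)
    (hH : C.dL * H + H * C.dL = 1 - single x x 1) : LocalizationTrivial C := by
  refine ⟨single () x 1, single x () 1, ?_, ?_, ?_, H, ?_⟩
  · ext _ j
    simp [CxData.dL, hnot_boundary]
  · ext i _
    simp [CxData.dL, hcycle]
  · ext
    simp
  · rw [single_mul_single_same, hH]
    ext i j : 1
    simp [CharTwo.sub_eq_add, add_comm]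

namespace Cn

/-- The basis `a, b, c, d, x` of `C_n`. The index type `(Cn n).C.idx` is `Fin 5` only after
unfolding `Cn`, which `simp` does not do when matching instances, so matrix units are built from
elements of `(Cn n).C.idx` itself. -/
def gen (n : ℕ) (i : Fin 5) : (Cn n).C.idx := i

@[simp] lemma gen_inj {n : ℕ} {i j : Fin 5} : gen n i = gen n j ↔ i = j := Iff.rfl

lemma one_eq (n : ℕ) {R : Type} [Semiring R] :
    (1 : Matrix (Cn n).C.idx (Cn n).C.idx R) = ∑ i : Fin 5, single (gen n i) (gen n i) 1 := by
  rw [← Matrix.sum_single_one]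
  rfl

lemma d_eq (n : ℕ) :
    (Cn n).C.d = single (gen n 1) (gen n 0) (X ^ n) + single (gen n 3) (gen n 2) (X ^ n) := by
  ext i j : 1
  simp only [Matrix.add_apply, Matrix.single_apply]
  fin_cases i <;> fin_cases j <;> simp [Cn, gen]

lemma dL_eq (n : ℕ) :
    (Cn n).C.dL = single (gen n 1) (gen n 0) (T n) + single (gen n 3) (gen n 2) (T n) := by
  rw [CxData.dL, d_eq, Matrix.map_add _ (map_add _), map_single, map_single]
  simp [toL]

lemma iota_eq (n : ℕ) :
    (Cn n).iota = single (gen n 0) (gen n 0) 1 + single (gen n 4) (gen n 0) 1 +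
      single (gen n 2) (gen n 1) 1 + single (gen n 1) (gen n 2) 1 +
      single (gen n 3) (gen n 3) 1 + single (gen n 4) (gen n 4) 1 := by
  ext i j : 1
  simp only [Matrix.add_apply, Matrix.single_apply]
  fin_cases i <;> fin_cases j <;> simp [Cn, gen]

lemma isComplex (n : ℕ) : (Cn n).C.IsComplex := by
  refine ⟨by simp [d_eq, add_mul, mul_add], ?_⟩
  intro i j k h
  fin_cases i <;> fin_cases j <;> simp [Cn, coeff_X_pow] at h ⊢ <;> (subst h; omega)

lemma dL_contraction_ab (n : ℕ) :
    (Cn n).C.dL * single (gen n 0) (gen n 1) (T (-n)) +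
        single (gen n 0) (gen n 1) (T (-n)) * (Cn n).C.dL =
      single (gen n 0) (gen n 0) 1 + single (gen n 1) (gen n 1) 1 := by
  simp [dL_eq, add_mul, mul_add, -T_mul, ← T_add, add_comm]

lemma dL_contraction_cd (n : ℕ) :
    (Cn n).C.dL * single (gen n 2) (gen n 3) (T (-n)) +
        single (gen n 2) (gen n 3) (T (-n)) * (Cn n).C.dL =
      single (gen n 2) (gen n 2) 1 + single (gen n 3) (gen n 3) 1 := by
  simp [dL_eq, add_mul, mul_add, -T_mul, ← T_add, add_comm]

lemma localizationTrivial (n : ℕ) : LocalizationTrivial (Cn n).C := by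
  refine localizationTrivial_of_contraction _ (gen n 4) ?_ ?_
    (single (gen n 0) (gen n 1) (T (-n)) + single (gen n 2) (gen n 3) (T (-n))) ?_
  · intro i
    fin_cases i <;> rfl
  · intro j
    fin_cases j <;> rfl
  · rw [mul_add, add_mul, add_add_add_comm, dL_contraction_ab, dL_contraction_cd, one_eq,
      Fin.sum_univ_five]
    abel

lemma skewGraded (n : ℕ) : SkewGraded (Cn n).C (Cn n).iota := by
  intro i j h
  fin_cases i <;> fin_cases j <;> simp [Cn, skew] at h ⊢

lemma dHat_eq_zero {n : ℕ} (hn : n ≠ 0) : (Cn n).C.dHat = 0 := by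
  rw [CxData.dHat, hatM_eq_map, d_eq, Matrix.map_add _ (map_add _), map_single, map_single]
  simp [coeff_X_pow, Ne.symm hn]

lemma PhiHat_eq_zero {n : ℕ} (hn : 2 ≤ n) : (Cn n).C.PhiHat = 0 := by
  have hPhi : (Cn n).C.Phi = (Cn n).C.d.map derivative := rfl
  have hn' : 0 ≠ n - 1 := by omega
  rw [CxData.PhiHat, hatM_eq_map, hPhi, d_eq, Matrix.map_add _ (map_add _), map_single,
    map_single, Matrix.map_add _ (map_add _), map_single, map_single]
  simp [coeff_X_pow, derivative_X_pow, hn']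

lemma iota_mul_iota (n : ℕ) : (Cn n).iota * (Cn n).iota = 1 := by
  -- `ι` does not depend on `n`, and `decide` needs a closed goal.
  show (Cn 0).iota * (Cn 0).iota = 1
  decide

theorem isHorizontal {n : ℕ} (hn : 2 ≤ n) : IsHorizontal (Cn n) :=
  .of_dHat_eq_zero_of_PhiHat_eq_zero _ (isComplex n) (localizationTrivial n) (skewGraded n)
    (dHat_eq_zero (by omega)) (PhiHat_eq_zero hn) (iota_mul_iota n)

end Cn

open Cn (gen)

-- Typed over the bases of `C_{n+1}` and `C_n` rather than `Fin 5`, so that it rewrites inside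
-- `AlmostLocalMap (Cn n) (Cn (n + 1)) fCn`.
lemma fCn_eq (n : ℕ) : @Eq (Matrix (Cn (n + 1)).C.idx (Cn n).C.idx PolyU) fCn
    (single (gen (n + 1) 0) (gen n 0) 1 + single (gen (n + 1) 1) (gen n 1) X +
      single (gen (n + 1) 4) (gen n 4) 1) := by
  have h : fCn = single 0 0 1 + single 1 1 X + single 4 4 1 := by
    ext i j : 1
    fin_cases i <;> fin_cases j <;> simp [fCn]
  exact h

lemma fCn_gradedMap (n : ℕ) : GradedMap (Cn n).C (Cn (n + 1)).C (0, 0) fCn := by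
  intro i j k h
  fin_cases i <;> fin_cases j <;> simp [fCn, Cn, coeff_one, coeff_X] at h ⊢ <;> (subst h; omega)

lemma fCn_localizedHomotopyEquiv (n : ℕ) :
    LocalizedHomotopyEquiv (Cn n).C (Cn (n + 1)).C fCn := by
  refine ⟨single (gen n 0) (gen (n + 1) 0) 1 + single (gen n 1) (gen (n + 1) 1) (T (-1)) +
      single (gen n 4) (gen (n + 1) 4) 1, ?_,
    .of_eq_sub (single (gen n 2) (gen n 3) (T (-n))) ?_,
    .of_eq_sub (single (gen (n + 1) 2) (gen (n + 1) 3) (T (-(n + 1 : ℕ)))) ?_⟩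
  · rw [Cn.dL_eq, Cn.dL_eq]
    simp [Matrix.add_mul, Matrix.mul_add, -T_mul, ← T_add]
  all_goals
    rw [Cn.dL_contraction_cd, fCn_eq n, Matrix.map_add _ (map_add _),
      Matrix.map_add _ (map_add _), map_single, map_single, map_single, Cn.one_eq,
      Fin.sum_univ_five]
    simp [Matrix.add_mul, Matrix.mul_add, toL, -T_mul, ← T_add]
    abel

theorem fCn_almostLocalMap (n : ℕ) : AlmostLocalMap (Cn n) (Cn (n + 1)) fCn := by
  refine ⟨fCn_gradedMap n, ?_, fCn_localizedHomotopyEquiv n, .of_eq ?_⟩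
  · rw [fCn_eq n, Cn.d_eq, Cn.d_eq]
    simp [Matrix.add_mul, Matrix.mul_add, pow_succ']
  · rw [fCn_eq n, hatM_eq_map, Matrix.map_add _ (map_add _), Matrix.map_add _ (map_add _),
      map_single, map_single, map_single, Cn.iota_eq, Cn.iota_eq]
    simp [Matrix.add_mul, Matrix.mul_add]

/-- For each `n ≥ 2`, the pair `C_n` is a horizontal almost
`ι_K`-complex, and the `F₂[U]`-linear chain map `f_n : C_n → C_{n+1}` defined
by `f_n(a_n) = a_{n+1}`, `f_n(b_n) = U b_{n+1}`, `f_n(c_n) = 0`,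
`f_n(d_n) = 0`, `f_n(x_n) = x_{n+1}` is an almost `ι_K`-local map; hence
`[C_n] ≤ [C_{n+1}]` in `𝔗^U_K`. -/
theorem Cn_isHorizontal_and_le (n : ℕ) (hn : 2 ≤ n) :
    IsHorizontal (Cn n) ∧
    AlmostLocalMap (Cn n) (Cn (n + 1)) fCn ∧
    Le (Cn n) (Cn (n + 1)) :=
  ⟨Cn.isHorizontal hn, fCn_almostLocalMap n, fCn, fCn_almostLocalMap n⟩

end
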